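/- The Veronese variety W₁ ⊂ ℙ(S_4 V*) of fourth powers of linear forms satisfies: F is a nonzero scalar multiple of a fourth power L⁴ if and only if the catalecticant map α_{2,F} : S_2 V → S_2 V* has rank exactly 1. -/

import Mathlib

/-!
If every second partial of a form `F` of degree `n + 3` is a multiple of one `G`, the symmetry of
third partials makes the first partials of `G` proportional to each other. A form whose partials
are all multiples of `L ^ m`, with `L` linear, is itself a multiple of `L ^ (m + 1)`: by Euler's
identity it is `A * L ^ m` with `A` linear, and differentiating that identity makes `A` a
multiple of `L`.
Induction on the degree then shows `G` is a multiple of `L ^ (n + 1)`, and two more applications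
lift this to `F = a • L ^ (n + 3)`. Conversely, the second partials of `c • L ^ 4` are multiples
of `L ^ 2`.
-/

open MvPolynomial

/-- The differential operator on `MvPolynomial σ ℂ` given by the monomial with
exponent vector `m`: the composite of `m i`-fold partial derivatives in each variable `i`. -/
noncomputable def diffOpMon {σ : Type*} [Fintype σ] [DecidableEq σ] (m : σ →₀ ℕ) :
    Module.End ℂ (MvPolynomial σ ℂ) :=
  (m.toMultiset.toList.map fun i => (pderiv i).toLinearMap).prod

/-- `diffOp D F` is the result of applying the polynomial `D` (in the dual variables)
to `F` as a constant-coefficient differential operator (apolarity action). -/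
noncomputable def diffOp {σ : Type*} [Fintype σ] [DecidableEq σ]
    (D F : MvPolynomial σ ℂ) : MvPolynomial σ ℂ :=
  (AddMonoidAlgebra.coeff D).sum fun m c => c • diffOpMon m F

/-- The rank of the `k`-th catalecticant of `F`: the dimension of the space spanned by all
`D(∂)F` for `D` homogeneous of degree `k`. -/
noncomputable def cataRank {σ : Type*} [Fintype σ] [DecidableEq σ]
    (k : ℕ) (F : MvPolynomial σ ℂ) : ℕ :=
  Module.finrank ℂ
    (Submodule.span ℂ ((fun D => diffOp D F) '' {D : MvPolynomial σ ℂ | D.IsHomogeneous k}))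

namespace MvPolynomial

section CommSemiring
variable {R σ : Type*} [CommSemiring R]

theorem pderiv_pderiv_comm (i j : σ) (p : MvPolynomial σ R) :
    pderiv i (pderiv j p) = pderiv j (pderiv i p) := by
  classical
  ext m
  simp only [coeff_pderiv, Finsupp.add_apply, Finsupp.single_apply]
  rcases eq_or_ne i j with rfl | hij
  · rfl
  · simp only [if_neg hij, if_neg hij.symm, add_zero, add_right_comm m]
    ring

theorem IsHomogeneous.pderiv_eq_C {L : MvPolynomial σ R} (hL : L.IsHomogeneous 1) (i : σ) :
    pderiv i L = C (coeff (Finsupp.single i 1) L) := by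
  have h0 : (pderiv i L).IsHomogeneous 0 := hL.pderiv
  rw [← totalDegree_zero_iff_isHomogeneous, totalDegree_eq_zero_iff_eq_C, coeff_pderiv] at h0
  simpa using h0

theorem IsHomogeneous.pderiv_pow {L : MvPolynomial σ R} (hL : L.IsHomogeneous 1) (i : σ)
    (n : ℕ) :
    pderiv i (L ^ (n + 1)) = ((n + 1) * coeff (Finsupp.single i 1) L) • L ^ n := by
  rw [MvPolynomial.pderiv_pow, hL.pderiv_eq_C, smul_eq_C_mul]
  simp only [map_mul, map_add, map_natCast, map_one, Nat.cast_add, Nat.cast_one,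
    add_tsub_cancel_right]
  ring

theorem IsHomogeneous.pderiv_pderiv_smul_pow {L : MvPolynomial σ R} (hL : L.IsHomogeneous 1)
    (c : R) (i j : σ) (n : ℕ) :
    pderiv i (pderiv j (c • L ^ (n + 2))) =
      (c * (n + 2) * (n + 1) * coeff (Finsupp.single j 1) L * coeff (Finsupp.single i 1) L) •
        L ^ n := by
  simp only [Derivation.map_smul, hL.pderiv_pow, smul_smul]
  congr 1
  push_cast
  ring

end CommSemiring

section Field
variable {K σ : Type*} [Field K]

theorem pderiv_eq_smul_pderiv_of_pderiv_eq_smul {f g : MvPolynomial σ K} {a : σ → K}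
    (h : ∀ k, pderiv k f = a k • g) {k₀ : σ} (hk₀ : a k₀ ≠ 0) (l : σ) :
    pderiv l g = (a l / a k₀) • pderiv k₀ g := by
  rw [← smul_right_inj hk₀, smul_smul, mul_div_cancel₀ _ hk₀, ← Derivation.map_smul, ← h,
    pderiv_pderiv_comm, h, Derivation.map_smul]

theorem IsHomogeneous.of_pderiv_eq_smul {n : ℕ} {f g : MvPolynomial σ K} {a : σ → K}
    (hf : f.IsHomogeneous (n + 1)) (h : ∀ k, pderiv k f = a k • g) {k₀ : σ}
    (hk₀ : a k₀ ≠ 0) :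
    g.IsHomogeneous n := by
  rw [← inv_smul_smul₀ hk₀ g, ← h, smul_eq_C_mul]
  exact hf.pderiv.C_mul _

end Field

section CharZero
variable {K σ : Type*} [Field K] [CharZero K] [Fintype σ]

theorem IsHomogeneous.eq_zero_of_forall_pderiv_eq_zero {n : ℕ} {f : MvPolynomial σ K}
    (hf : f.IsHomogeneous n) (hn : n ≠ 0) (h : ∀ i, pderiv i f = 0) : f = 0 := by
  have := hf.sum_X_mul_pderiv
  simp only [h, mul_zero, Finset.sum_const_zero] at this
  exact (smul_eq_zero.mp this.symm).resolve_left hn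

theorem IsHomogeneous.exists_coeff_single_ne_zero {L : MvPolynomial σ K}
    (hL : L.IsHomogeneous 1) (hL0 : L ≠ 0) : ∃ j, coeff (Finsupp.single j 1) L ≠ 0 := by
  by_contra! h0
  exact hL0 <| hL.eq_zero_of_forall_pderiv_eq_zero one_ne_zero fun j => by
    rw [hL.pderiv_eq_C, h0, C_0]

theorem IsHomogeneous.exists_eq_smul_pow_of_pderiv_eq_smul_pow {n : ℕ} {f L : MvPolynomial σ K}
    (hf : f.IsHomogeneous (n + 2)) (hL : L.IsHomogeneous 1) (a : σ → K)
    (h : ∀ k, pderiv k f = a k • L ^ (n + 1)) : ∃ c : K, f = c • L ^ (n + 2) := by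
  by_cases hL0 : L = 0
  · refine ⟨0, ?_⟩
    rw [zero_smul]
    exact hf.eq_zero_of_forall_pderiv_eq_zero (by omega) fun k => by simp [h, hL0]
  obtain ⟨j, hℓ⟩ := hL.exists_coeff_single_ne_zero hL0
  set A : MvPolynomial σ K := ∑ k, a k • X k
  have euler : (n + 2 : K) • f = A * L ^ (n + 1) := by
    rw [← Nat.cast_ofNat, ← Nat.cast_add, Nat.cast_smul_eq_nsmul, ← hf.sum_X_mul_pderiv,
      Finset.sum_mul]
    simp only [h, mul_smul_comm, smul_mul_assoc]
  have hA : pderiv j A = C (a j) := by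
    classical
    simp [A, pderiv_X, Pi.single_apply, smul_eq_C_mul]
  -- `A` is proportional to `L`: differentiate Euler's identity along a direction `j` in which
  -- `L` is not constant.
  have hAL : coeff (Finsupp.single j 1) L • A = a j • L := by
    have h1 := congrArg (pderiv j) euler
    rw [Derivation.map_smul, h j, pderiv_mul, hL.pderiv_pow, hA] at h1
    have h2 : ((n + 1 : ℕ) : MvPolynomial σ K) * L ^ n *
        (coeff (Finsupp.single j 1) L • A - a j • L) = 0 := by
      simp only [smul_eq_C_mul, map_add, map_mul, map_natCast, map_ofNat, map_one] at h1 ⊢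
      push_cast at h1 ⊢
      linear_combination -h1
    have hn : ((n + 1 : ℕ) : MvPolynomial σ K) * L ^ n ≠ 0 :=
      mul_ne_zero (Nat.cast_ne_zero.mpr n.succ_ne_zero) (pow_ne_zero n hL0)
    exact sub_eq_zero.mp ((mul_eq_zero.mp h2).resolve_left hn)
  have hc : coeff (Finsupp.single j 1) L * (n + 2) ≠ 0 := mul_ne_zero hℓ (by norm_cast)
  refine ⟨a j / (coeff (Finsupp.single j 1) L * (n + 2)), ?_⟩
  rw [← smul_right_inj hc, smul_smul, mul_div_cancel₀ _ hc, mul_smul, euler, ← smul_mul_assoc,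
    hAL, smul_mul_assoc, ← pow_succ']

theorem IsHomogeneous.exists_eq_smul_pow_of_pderiv_eq_smul {n : ℕ} {f g : MvPolynomial σ K}
    (hf : f.IsHomogeneous (n + 1)) (a : σ → K) (h : ∀ k, pderiv k f = a k • g) :
    ∃ (c : K) (L : MvPolynomial σ K), L.IsHomogeneous 1 ∧ f = c • L ^ (n + 1) := by
  induction n generalizing f g a with
  | zero => exact ⟨1, f, hf, by simp⟩
  | succ n ih =>
    by_cases ha : ∀ k, a k = 0
    · refine ⟨0, 0, isHomogeneous_zero _ _ _, ?_⟩
      rw [zero_smul]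
      exact hf.eq_zero_of_forall_pderiv_eq_zero (by omega) fun k => by simp [h, ha]
    push Not at ha
    obtain ⟨k₀, hk₀⟩ := ha
    obtain ⟨c, L, hL, rfl⟩ := ih (hf.of_pderiv_eq_smul h hk₀) _
      (pderiv_eq_smul_pderiv_of_pderiv_eq_smul h hk₀)
    obtain ⟨c', hc'⟩ := hf.exists_eq_smul_pow_of_pderiv_eq_smul_pow hL (fun k => a k * c)
      fun k => by rw [h, smul_smul]
    exact ⟨c', L, hL, hc'⟩

theorem IsHomogeneous.exists_eq_smul_pow_of_pderiv_pderiv_eq_smul {n : ℕ}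
    {f G : MvPolynomial σ K} (hf : f.IsHomogeneous (n + 3)) (c : σ → σ → K)
    (h : ∀ i j, pderiv i (pderiv j f) = c i j • G) :
    ∃ (a : K) (L : MvPolynomial σ K), L.IsHomogeneous 1 ∧ f = a • L ^ (n + 3) := by
  have hfj : ∀ j, (pderiv j f).IsHomogeneous (n + 2) := fun j => hf.pderiv
  by_cases hc : ∀ i j, c i j = 0
  · refine ⟨0, 0, isHomogeneous_zero _ _ _, ?_⟩
    rw [zero_smul]
    refine hf.eq_zero_of_forall_pderiv_eq_zero (by omega) fun j => ?_
    exact (hfj j).eq_zero_of_forall_pderiv_eq_zero (by omega) fun i => by simp [h, hc]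
  push Not at hc
  obtain ⟨i₀, j₀, hc₀⟩ := hc
  have hG : G.IsHomogeneous (n + 1) := (hfj j₀).of_pderiv_eq_smul (h · j₀) hc₀
  obtain ⟨γ, L, hL, hGL⟩ := hG.exists_eq_smul_pow_of_pderiv_eq_smul _
    (pderiv_eq_smul_pderiv_of_pderiv_eq_smul (h · j₀) hc₀)
  have hfL : ∀ j, ∃ b : K, pderiv j f = b • L ^ (n + 2) := fun j =>
    (hfj j).exists_eq_smul_pow_of_pderiv_eq_smul_pow hL (fun i => c i j * γ)
      fun i => by rw [h, hGL, smul_smul]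
  choose b hb using hfL
  obtain ⟨a, ha⟩ := hf.exists_eq_smul_pow_of_pderiv_eq_smul_pow hL b hb
  exact ⟨a, L, hL, ha⟩

end CharZero
end MvPolynomial

section Rank
variable {K V ι : Type*} [Field K] [AddCommGroup V] [Module K V]

theorem finrank_span_range_smul_eq_one {v : V} (hv : v ≠ 0) {a : ι → K} {i : ι}
    (ha : a i ≠ 0) :
    Module.finrank K (Submodule.span K (Set.range fun i => a i • v)) = 1 := by
  suffices Submodule.span K (Set.range fun i => a i • v) = K ∙ v by
    rw [this, finrank_span_singleton hv]
  apply le_antisymm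
  · rw [Submodule.span_le]
    rintro _ ⟨j, rfl⟩
    exact Submodule.smul_mem _ _ (Submodule.mem_span_singleton_self v)
  · rw [Submodule.span_singleton_le_iff_mem]
    exact (Submodule.smul_mem_iff _ ha).mp (Submodule.subset_span ⟨i, rfl⟩)

theorem exists_eq_smul_of_finrank_span_range_eq_one {v : ι → V}
    (h : Module.finrank K (Submodule.span K (Set.range v)) = 1) :
    ∃ w : V, ∀ i, ∃ c : K, v i = c • w := by
  obtain ⟨w, -, hw⟩ := finrank_eq_one_iff'.mp h
  refine ⟨w, fun i => ?_⟩
  obtain ⟨c, hc⟩ := hw ⟨v i, Submodule.subset_span ⟨i, rfl⟩⟩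
  exact ⟨c, congrArg Subtype.val hc.symm⟩

end Rank

section Catalecticant
variable {σ : Type*} [Fintype σ] [DecidableEq σ]

theorem diffOpMon_apply_of_toList_eq {m : σ →₀ ℕ} {i j : σ}
    (h : m.toMultiset.toList = [i, j]) (F : MvPolynomial σ ℂ) :
    diffOpMon m F = pderiv i (pderiv j F) := by
  simp [diffOpMon, h, Module.End.mul_apply]

theorem diffOpMon_single_add_single (i j : σ) (F : MvPolynomial σ ℂ) :
    diffOpMon (Finsupp.single i 1 + Finsupp.single j 1) F = pderiv i (pderiv j F) := by
  have hperm : (Finsupp.single i 1 + Finsupp.single j 1).toMultiset.toList.Perm [i, j] := by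
    rw [← Multiset.coe_eq_coe, Multiset.coe_toList, Finsupp.toMultiset_add,
      Finsupp.toMultiset_single, Finsupp.toMultiset_single, one_smul, one_smul,
      Multiset.singleton_add]
    rfl
  rcases List.perm_pair.mp hperm with h | h <;> rw [diffOpMon_apply_of_toList_eq h]
  exact pderiv_pderiv_comm j i F

theorem span_diffOp_isHomogeneous_two (F : MvPolynomial σ ℂ) :
    Submodule.span ℂ ((fun D => diffOp D F) '' {D : MvPolynomial σ ℂ | D.IsHomogeneous 2}) =
      Submodule.span ℂ (Set.range fun p : σ × σ => pderiv p.1 (pderiv p.2 F)) := by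
  apply le_antisymm
  · rw [Submodule.span_le]
    rintro _ ⟨D, hD, rfl⟩
    refine Submodule.finsuppSum_mem _ _ _ _ fun m hm => Submodule.smul_mem _ _ ?_
    have hlen : m.toMultiset.toList.length = 2 := by
      rw [Multiset.length_toList, Finsupp.card_toMultiset]
      simpa [Finsupp.weight_apply, Finsupp.sum] using hD hm
    obtain ⟨i, j, hij⟩ := List.length_eq_two.mp hlen
    rw [diffOpMon_apply_of_toList_eq hij]
    exact Submodule.subset_span ⟨(i, j), rfl⟩
  · rw [Submodule.span_le]
    rintro _ ⟨⟨i, j⟩, rfl⟩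
    refine Submodule.subset_span
      ⟨X i * X j, (isHomogeneous_X ℂ i).mul (isHomogeneous_X ℂ j), ?_⟩
    dsimp only
    rw [X, X, monomial_mul, one_mul, diffOp, sum_monomial_eq (by simp), one_smul,
      diffOpMon_single_add_single]

theorem cataRank_two_eq (F : MvPolynomial σ ℂ) :
    cataRank 2 F =
      Module.finrank ℂ
        (Submodule.span ℂ (Set.range fun p : σ × σ => pderiv p.1 (pderiv p.2 F))) := by
  rw [cataRank, span_diffOp_isHomogeneous_two]

end Catalecticant

/-- a ternary quartic `F` is a nonzero scalar multiple of a fourth power of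
a (nonzero) linear form iff its middle catalecticant has rank exactly 1. -/
theorem stmt_17 (F : MvPolynomial (Fin 3) ℂ) (hF : F.IsHomogeneous 4) :
    (∃ (c : ℂ) (L : MvPolynomial (Fin 3) ℂ),
        c ≠ 0 ∧ L ≠ 0 ∧ L.IsHomogeneous 1 ∧ F = c • L ^ 4) ↔
      cataRank 2 F = 1 := by
  rw [cataRank_two_eq]
  constructor
  · rintro ⟨c, L, hc, hL0, hL, rfl⟩
    obtain ⟨i, hi⟩ := hL.exists_coeff_single_ne_zero hL0
    rw [funext fun p : Fin 3 × Fin 3 => hL.pderiv_pderiv_smul_pow c p.1 p.2 2]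
    exact finrank_span_range_smul_eq_one (pow_ne_zero 2 hL0) (i := (i, i)) (by norm_num [hc, hi])
  · intro h
    have hF0 : F ≠ 0 := by
      rintro rfl
      rw [Submodule.span_eq_bot.mpr ?_, finrank_bot] at h
      · exact zero_ne_one h
      · rintro _ ⟨p, rfl⟩
        simp
    obtain ⟨G, hG⟩ := exists_eq_smul_of_finrank_span_range_eq_one h
    choose c hc using hG
    obtain ⟨a, L, hL, rfl⟩ := hF.exists_eq_smul_pow_of_pderiv_pderiv_eq_smul (n := 1)
      (fun i j => c (i, j)) fun i j => hc (i, j)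
    obtain ⟨ha, hL4⟩ := smul_ne_zero_iff.mp hF0
    exact ⟨a, L, ha, ne_zero_pow (by norm_num) hL4, hL, rfl⟩
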